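/- arXiv:2401.10459 — 4 statements merged into one kernel-verified Lean document; each statement's English description precedes it below -/
import Mathlib

section
/- Every countable completely regular Hausdorff space X is Grothendieck; that is, Cp(X) is a hereditary g-space: for every subspace Y of Cp(X), every subset A ⊆ Y that is countably compact in Y has compact closure in Y. -/
open Set Filter Topology

def IsLimitPointOf {Z : Type*} [TopologicalSpace Z] (x : Z) (S : Set Z) : Prop :=
  ∀ U : Set Z, IsOpen U → x ∈ U → (S ∩ U).Infinite

def CountablyCompactIn {Z : Type*} [TopologicalSpace Z] (A B : Set Z) : Prop :=
  ∀ S ⊆ A, S.Infinite → ∃ x ∈ B, IsLimitPointOf x S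

def IsGSpace (Y : Type*) [TopologicalSpace Y] : Prop :=
  ∀ A : Set Y, CountablyCompactIn A Set.univ → IsCompact (closure A)

def IsHereditaryGSpace (Y : Type*) [TopologicalSpace Y] : Prop :=
  ∀ B : Set Y, IsGSpace B

def Cp (X : Type*) [TopologicalSpace X] : Type _ := {f : X → ℝ // Continuous f}

instance (X : Type*) [TopologicalSpace X] : TopologicalSpace (Cp X) :=
  inferInstanceAs (TopologicalSpace {f : X → ℝ // Continuous f})

def CpI (X : Type*) [TopologicalSpace X] : Type _ := {f : X → unitInterval // Continuous f}

instance (X : Type*) [TopologicalSpace X] : TopologicalSpace (CpI X) :=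
  inferInstanceAs (TopologicalSpace {f : X → unitInterval // Continuous f})

def CountablyTight (X : Type*) [TopologicalSpace X] : Prop :=
  ∀ (A : Set X) (x : X), x ∈ closure A → ∃ B ⊆ A, B.Countable ∧ x ∈ closure B

def CountablyCompactSpace' (Y : Type*) [TopologicalSpace Y] : Prop :=
  ∀ S : Set Y, S.Infinite → ∃ x : Y, IsLimitPointOf x S

def DULC {X : Type*} [TopologicalSpace X] (A : Set (CpI X)) : Prop :=
  ∀ (f : ℕ → CpI X), (∀ n, f n ∈ A) → ∀ (x : ℕ → X) (𝒰 𝒱 : Ultrafilter ℕ),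
    (∃ y : X, Filter.Tendsto x (𝒱 : Filter ℕ) (nhds y)) →
    ∀ (g h : ℕ → unitInterval) (u v : unitInterval),
      (∀ n, Filter.Tendsto (fun m => (f n).1 (x m)) (𝒱 : Filter ℕ) (nhds (g n))) →
      Filter.Tendsto g (𝒰 : Filter ℕ) (nhds u) →
      (∀ m, Filter.Tendsto (fun n => (f n).1 (x m)) (𝒰 : Filter ℕ) (nhds (h m))) →
      Filter.Tendsto h (𝒱 : Filter ℕ) (nhds v) →
      u = v

def DLC {X : Type*} [TopologicalSpace X] (A : Set (CpI X)) : Prop :=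
  ∀ (f : ℕ → CpI X), (∀ n, f n ∈ A) → ∀ (x : ℕ → X),
    ∀ (g h : ℕ → unitInterval) (u v : unitInterval),
      (∀ n, Filter.Tendsto (fun m => (f n).1 (x m)) Filter.atTop (nhds (g n))) →
      Filter.Tendsto g Filter.atTop (nhds u) →
      (∀ m, Filter.Tendsto (fun n => (f n).1 (x m)) Filter.atTop (nhds (h m))) →
      Filter.Tendsto h Filter.atTop (nhds v) →
      u = v


/-! For countable `X`, `Cp X` is a subspace of the countable power `ℝ^X`, so every subspace of
it is pseudometrizable. In a pseudometric space, a set `A` that is countably compact in the space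
has sequentially compact closure: a sequence in `closure A` shadows a sequence in `A`, whose
repeated value or a limit point of its range is a cluster point of both, and first countability
turns that cluster point into the limit of a subsequence. -/

theorem CountablyCompactIn.exists_mapClusterPt {Z : Type*} [TopologicalSpace Z] {A B : Set Z}
    (hA : CountablyCompactIn A B) {u : ℕ → Z} (hu : ∀ n, u n ∈ A) :
    ∃ x, MapClusterPt x atTop u := by
  by_cases hfin : (range u).Finite
  · obtain ⟨x, -, hx⟩ := hfin.isCompact.exists_mapClusterPt_of_frequently
      (Frequently.of_forall (f := atTop) (mem_range_self (f := u)))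
    exact ⟨x, hx⟩
  · obtain ⟨x, -, hx⟩ := hA (range u) (range_subset_iff.2 hu) hfin
    refine ⟨x, mapClusterPt_iff_frequently.2 fun s hs => ?_⟩
    obtain ⟨U, hUs, hUo, hxU⟩ := mem_nhds_iff.1 hs
    refine Nat.frequently_atTop_iff_infinite.2 fun hfin' => hx U hUo hxU ?_
    refine (hfin'.image u).subset ?_
    rintro _ ⟨⟨n, rfl⟩, hn⟩
    exact ⟨n, hUs hn, rfl⟩

theorem MapClusterPt.of_tendsto_dist {Z : Type*} [PseudoMetricSpace Z] {x : Z} {a y : ℕ → Z}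
    (hx : MapClusterPt x atTop a) (hya : Tendsto (fun n => dist (y n) (a n)) atTop (𝓝 0)) :
    MapClusterPt x atTop y := by
  refine mapClusterPt_iff_frequently.2 fun s hs => ?_
  obtain ⟨ε, hε, hεs⟩ := Metric.mem_nhds_iff.1 hs
  have hnear : ∀ᶠ n in atTop, dist (y n) (a n) < ε / 2 :=
    (tendsto_order.1 hya).2 _ (half_pos hε)
  refine ((hx.frequently (Metric.ball_mem_nhds x (half_pos hε))).and_eventually hnear).mono ?_
  rintro n ⟨han, hyn⟩
  apply hεs
  calc dist (y n) x ≤ dist (y n) (a n) + dist (a n) x := dist_triangle _ _ _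
    _ < ε := by linarith

theorem CountablyCompactIn.isSeqCompact_closure {Z : Type*} [PseudoMetricSpace Z] {A B : Set Z}
    (hA : CountablyCompactIn A B) : IsSeqCompact (closure A) := by
  intro y hy
  have happrox : ∀ n : ℕ, ∃ z ∈ A, dist (y n) z < 1 / (n + 1) := fun n =>
    Metric.mem_closure_iff.1 (hy n) _ Nat.one_div_pos_of_nat
  choose a haA hya using happrox
  obtain ⟨x, hx⟩ := hA.exists_mapClusterPt haA
  have hxA : x ∈ closure A := hx.mem_closure_of_mem A (Eventually.of_forall (f := atTop) haA)
  have hdist : Tendsto (fun n => dist (y n) (a n)) atTop (𝓝 0) :=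
    squeeze_zero (fun _ => dist_nonneg) (fun n => (hya n).le)
      tendsto_one_div_add_atTop_nhds_zero_nat
  exact ⟨x, hxA, (hx.of_tendsto_dist hdist).tendsto_subseq⟩

theorem isGSpace_of_pseudoMetrizableSpace (Y : Type*) [TopologicalSpace Y]
    [TopologicalSpace.PseudoMetrizableSpace Y] : IsGSpace Y := by
  let := TopologicalSpace.pseudoMetrizableSpacePseudoMetric Y
  exact fun A hA => hA.isSeqCompact_closure.isCompact

instance Cp.pseudoMetrizableSpace {X : Type*} [TopologicalSpace X] [Countable X] :
    TopologicalSpace.PseudoMetrizableSpace (Cp X) :=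
  inferInstanceAs (TopologicalSpace.PseudoMetrizableSpace {f : X → ℝ | Continuous f})

theorem countable_grothendieck_general
    {X : Type*} [TopologicalSpace X]
    [Countable X] : IsHereditaryGSpace (Cp X) :=
  fun B => isGSpace_of_pseudoMetrizableSpace B

/-- Every countable completely regular Hausdorff space is Grothendieck:
`Cp(X)` is a hereditary g-space. -/
theorem countable_grothendieck
    {X : Type*} [TopologicalSpace X] [CompletelyRegularSpace X] [T2Space X]
    [Countable X] : IsHereditaryGSpace (Cp X) :=
  countable_grothendieck_general
end

section
/- Let X be a completely regular Hausdorff k-space and A ⊆ Cp(X,[0,1]). Then the closure of A in Cp(X,[0,1]) is compact if and only if DULC(A,X) holds. -/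
/-! If `closure A` is compact, iterate the limits through a pointwise cluster point `Φ` of
`(f n)` along `𝒰`: both iterated limits equal `Φ y`, because `Φ` and every `f n` are
continuous.

Conversely, the pointwise closure of `A` in the compact space `[0,1]^X` is compact, so it suffices
that every function `F` in it is continuous; in a k-space, continuity on each compact `K` is
enough. If `F` jumps by `ε` at `y ∈ K`, one builds inductively `f n ∈ A` and `x m ∈ K` with
`F (x m)` at distance `≥ ε` from `F y`, such that `f n → F` at `y` and at every `x m`, while
`f n (x m) → f n y` as `m → ∞`. Along a free ultrafilter `(x m)` converges in `K`, and the two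
iterated limits are `F y` and a limit of the `F (x m)`, contradicting `DULC`. -/

open Set Filter Topology

/-- A k-space: a set is closed iff its intersection with each compact subspace is closed
in that subspace. -/
def IsKSpace (X : Type*) [TopologicalSpace X] : Prop :=
  ∀ Y : Set X, IsClosed Y ↔
    ∀ K : Set X, IsCompact K → IsClosed ((↑·) ⁻¹' Y : Set K)

lemma continuous_cpI_eval {X : Type*} [TopologicalSpace X] (z : X) :
    Continuous fun f : CpI X => f.1 z :=
  (continuous_apply z).comp continuous_subtype_val

lemma DULC.of_isCompact_closure {X : Type*} [TopologicalSpace X] {A : Set (CpI X)}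
    (hA : IsCompact (closure A)) : DULC A := by
  intro f hfA x 𝒰 𝒱 ⟨y, hy⟩ g h u v hg hgu hh hhv
  obtain ⟨Φ, -, hΦ⟩ := hA.ultrafilter_le_nhds (𝒰.map f)
    (le_principal_iff.2 <| Ultrafilter.mem_map.2 <| univ_mem' fun n => subset_closure (hfA n))
  have hfΦ (z : X) : Tendsto (fun n => (f n).1 z) 𝒰 (𝓝 (Φ.1 z)) :=
    ((continuous_cpI_eval z).tendsto Φ).comp hΦ
  have hg_eq : g = fun n => (f n).1 y :=
    funext fun n => tendsto_nhds_unique (hg n) (((f n).2.tendsto y).comp hy)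
  have hh_eq : h = fun m => Φ.1 (x m) :=
    funext fun m => tendsto_nhds_unique (hh m) (hfΦ (x m))
  subst hg_eq hh_eq
  exact (tendsto_nhds_unique hgu (hfΦ y)).trans
    (tendsto_nhds_unique ((Φ.2.tendsto y).comp hy) hhv)

lemma eventually_forall_finset_dist_lt {ι Y Z : Type*} [TopologicalSpace Y]
    [PseudoMetricSpace Z] {φ : ι → Y → Z} (hφ : ∀ i, Continuous (φ i)) (s : Finset ι)
    {δ : ℝ} (hδ : 0 < δ) (p : Y) : ∀ᶠ z in 𝓝 p, ∀ i ∈ s, dist (φ i z) (φ i p) < δ :=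
  s.eventually_all.2 fun i _ => (hφ i).continuousAt (Metric.ball_mem_nhds _ hδ)

lemma tendsto_of_eventually_dist_lt {ι Z : Type*} [PseudoMetricSpace Z] {l : Filter ι}
    {u : ι → Z} {c : Z} {δ : ι → ℝ} (hδ : Tendsto δ l (𝓝 0))
    (h : ∀ᶠ n in l, dist (u n) c < δ n) : Tendsto u l (𝓝 c) :=
  tendsto_iff_dist_tendsto_zero.2 <|
    squeeze_zero' (Eventually.of_forall fun _ => dist_nonneg) (h.mono fun _ => le_of_lt) hδ

lemma exists_seq_tendsto_of_mem_closure {X : Type*} [TopologicalSpace X] {A : Set (CpI X)}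
    {F : X → unitInterval} (hF : F ∈ closure ((fun f : CpI X => f.1) '' A))
    {S : Set X} {y : X} (hy : y ∈ closure S) :
    ∃ (f : ℕ → CpI X) (x : ℕ → X), (∀ n, f n ∈ A) ∧ (∀ m, x m ∈ S) ∧
      Tendsto (fun n => (f n).1 y) atTop (𝓝 (F y)) ∧
      (∀ m, Tendsto (fun n => (f n).1 (x m)) atTop (𝓝 (F (x m)))) ∧
      ∀ n, Tendsto (fun m => (f n).1 (x m)) atTop (𝓝 ((f n).1 y)) := by
  classical
  -- Each `f n` is chosen close to `F` at `y` and at the earlier `x m`, each `x n` close to `y`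
  -- for the earlier `f m`. The recursion provides no index, so every term carries a strictly
  -- increasing tag `k`, and the tolerance is `1 / (k + 1)`.
  set tol : ℕ → ℝ := fun k => 1 / (k + 1)
  let P : ℕ × CpI X × X → Prop := fun a =>
    a.2.1 ∈ A ∧ a.2.2 ∈ S ∧ dist (a.2.1.1 y) (F y) < tol a.1
  let r : ℕ × CpI X × X → ℕ × CpI X × X → Prop := fun a b =>
    a.1 < b.1 ∧ dist (b.2.1.1 a.2.2) (F a.2.2) < tol b.1 ∧
      dist (a.2.1.1 b.2.2) (a.2.1.1 y) < tol b.1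
  obtain ⟨p, hP, hr⟩ : ∃ p : ℕ → ℕ × CpI X × X, (∀ n, P (p n)) ∧
      ∀ m n, m < n → r (p m) (p n) := by
    refine exists_seq_of_forall_finset_exists P r fun s _ => ?_
    set k := s.sup Prod.fst + 1
    have htol : 0 < tol k := by positivity
    obtain ⟨_, ⟨f, hfA, rfl⟩, hf⟩ := ((mem_closure_iff_frequently.1 hF).and_eventually
      (eventually_forall_finset_dist_lt (fun t => continuous_apply t)
        (insert y (s.image fun a => a.2.2)) htol F)).exists
    obtain ⟨x, hxS, hx⟩ := ((mem_closure_iff_frequently.1 hy).and_eventually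
      (eventually_forall_finset_dist_lt (fun a => a.2.1.2) s htol y)).exists
    refine ⟨(k, f, x), ⟨hfA, hxS, hf y (Finset.mem_insert_self _ _)⟩,
      fun a ha => ⟨?_, ?_, hx a ha⟩⟩
    · exact Nat.lt_succ_of_le (Finset.le_sup (f := Prod.fst) ha)
    · exact hf _ (Finset.mem_insert_of_mem (Finset.mem_image_of_mem _ ha))
  have htol : Tendsto (fun n => tol (p n).1) atTop (𝓝 0) :=
    tendsto_one_div_add_atTop_nhds_zero_nat.comp
      (strictMono_nat_of_lt_succ fun n => (hr n (n + 1) n.lt_succ_self).1).tendsto_atTop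
  refine ⟨fun n => (p n).2.1, fun n => (p n).2.2, fun n => (hP n).1, fun n => (hP n).2.1,
    tendsto_of_eventually_dist_lt htol (Eventually.of_forall fun n => (hP n).2.2),
    fun m => tendsto_of_eventually_dist_lt htol ?_,
    fun n => tendsto_of_eventually_dist_lt htol ?_⟩
  · filter_upwards [eventually_gt_atTop m] with n hn using (hr m n hn).2.1
  · filter_upwards [eventually_gt_atTop n] with m hm using (hr n m hm).2.2

lemma DULC.apply_mem_closure_image {X : Type*} [TopologicalSpace X] {A : Set (CpI X)}
    (hd : DULC A) {F : X → unitInterval} (hF : F ∈ closure ((fun f : CpI X => f.1) '' A))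
    {K S : Set X} (hK : IsCompact K) (hSK : S ⊆ K) {y : X} (hy : y ∈ closure S) :
    F y ∈ closure (F '' S) := by
  obtain ⟨f, x, hfA, hxS, hfy, hfx, hxy⟩ := exists_seq_tendsto_of_mem_closure hF hy
  let 𝒱 := hyperfilter ℕ
  obtain ⟨z, -, hz⟩ := hK.ultrafilter_le_nhds (𝒱.map x)
    (le_principal_iff.2 (Ultrafilter.mem_map.2 (univ_mem' fun m => hSK (hxS m))))
  have hFx : Tendsto (fun m => F (x m)) 𝒱 (𝓝 (𝒱.map fun m => F (x m)).lim) :=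
    Ultrafilter.le_nhds_lim _
  rw [hd f hfA x 𝒱 𝒱 ⟨z, hz⟩ _ _ _ _ (fun n => (hxy n).mono_left Nat.hyperfilter_le_atTop)
    (hfy.mono_left Nat.hyperfilter_le_atTop)
    (fun m => (hfx m).mono_left Nat.hyperfilter_le_atTop) hFx]
  exact mem_closure_of_tendsto hFx (Eventually.of_forall fun m => mem_image_of_mem F (hxS m))

lemma DULC.continuousOn_of_mem_closure {X : Type*} [TopologicalSpace X] {A : Set (CpI X)}
    (hd : DULC A) {F : X → unitInterval} (hF : F ∈ closure ((fun f : CpI X => f.1) '' A))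
    {K : Set X} (hK : IsCompact K) : ContinuousOn F K := by
  intro y hy
  by_contra hFy
  obtain ⟨ε, hε, hjump⟩ : ∃ ε > 0, ∃ᶠ x in 𝓝[K] y, ε ≤ dist (F x) (F y) := by
    simpa [ContinuousWithinAt, Metric.tendsto_nhds] using hFy
  set S := {x ∈ K | ε ≤ dist (F x) (F y)}
  have hyS : y ∈ closure S :=
    mem_closure_iff_frequently.2 <|
      (frequently_nhdsWithin_iff.1 hjump).mono fun x hx => ⟨hx.2, hx.1⟩
  have hfar : closure (F '' S) ⊆ {t | ε ≤ dist t (F y)} :=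
    closure_minimal (image_subset_iff.2 fun x hx => hx.2)
      (isClosed_le continuous_const (continuous_id.dist continuous_const))
  have := hfar (hd.apply_mem_closure_image hF hK (sep_subset K _) hyS)
  simp only [mem_ofPred_eq, dist_self] at this
  linarith

lemma IsKSpace.continuous_of_forall_isCompact_continuousOn {X Y : Type*} [TopologicalSpace X]
    [TopologicalSpace Y] (hk : IsKSpace X) {F : X → Y}
    (hF : ∀ K : Set X, IsCompact K → ContinuousOn F K) : Continuous F :=
  continuous_iff_isClosed.2 fun _ hC => (hk _).2 fun K hK =>
    hC.preimage (continuousOn_iff_continuous_domRestrict.1 (hF K hK))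

lemma CpI.isCompact_closure_of_forall_continuous {X : Type*} [TopologicalSpace X]
    {A : Set (CpI X)}
    (hA : ∀ F ∈ closure ((fun f : CpI X => f.1) '' A), Continuous F) :
    IsCompact (closure A) := by
  have hemb : IsEmbedding fun f : CpI X => f.1 := IsEmbedding.subtypeVal
  rw [hemb.closure_eq_preimage_closure_image, hemb.isCompact_iff,
    image_preimage_eq_of_subset fun F hF => ⟨⟨F, hA F hF⟩, rfl⟩]
  exact isClosed_closure.isCompact

theorem kSpace_relativelyCompact_iff_DULC_general
    {X : Type*} [TopologicalSpace X]
    (hk : IsKSpace X) (A : Set (CpI X)) :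
    IsCompact (closure A) ↔ DULC A :=
  ⟨DULC.of_isCompact_closure, fun hd =>
    CpI.isCompact_closure_of_forall_continuous fun _ hF =>
      hk.continuous_of_forall_isCompact_continuousOn fun _ hK =>
        hd.continuousOn_of_mem_closure hF hK⟩

/-- For a completely regular Hausdorff k-space `X`, a subset of
`Cp(X,[0,1])` has compact closure iff `DULC(A,X)` holds. -/
theorem kSpace_relativelyCompact_iff_DULC
    {X : Type*} [TopologicalSpace X] [CompletelyRegularSpace X] [T2Space X]
    (hk : IsKSpace X) (A : Set (CpI X)) :
    IsCompact (closure A) ↔ DULC A :=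
  kSpace_relativelyCompact_iff_DULC_general hk A
end

section
/- Let X be a separable completely regular Hausdorff space and A ⊆ Cp(X,[0,1]). Then the closure of A in Cp(X,[0,1]) is compact if and only if DULC(A,X) holds. -/
/-!
Since `[0,1]^X` is compact and `Cp(X,[0,1])` carries the subspace topology, `closure A` is
compact iff every pointwise limit `F` of `A` is continuous. Compactness gives DULC because both
iterated limits equal `G y`, where `G` is the `𝒰`-limit of `f n` and `y` the `𝒱`-limit of `x m`.
Conversely, fix a dense sequence `d` and a point `y`. The restriction map to the countable set
`range d ∪ {y}` lands in a metrizable space, so some sequence `f n` in `A` converges to `F` at `y`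
and at every `d m`; DULC applied to `f` and `d` along an ultrafilter `𝒱 → y` then says that
`F (d m) → F y` as `d m → y`. A function with these limits along a dense set is continuous.
-/

open Set Filter Topology

theorem Topology.IsInducing.isCompact_closure_of_closure_image_subset_range
    {α β : Type*} [TopologicalSpace α] [TopologicalSpace β] [CompactSpace β] {f : α → β}
    (hf : IsInducing f) {s : Set α} (h : closure (f '' s) ⊆ range f) :
    IsCompact (closure s) := by
  rw [hf.closure_eq_preimage_closure_image]
  exact hf.isCompact_preimage' isClosed_closure.isCompact h

theorem exists_seq_forall_tendsto_of_mem_closure {X ι Y : Type*} [Countable ι]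
    [TopologicalSpace Y] [FirstCountableTopology Y] {S : Set (X → Y)} {F : X → Y}
    (hF : F ∈ closure S) (z : ι → X) :
    ∃ f : ℕ → X → Y, (∀ n, f n ∈ S) ∧ ∀ i, Tendsto (fun n => f n (z i)) atTop (𝓝 (F (z i))) := by
  let restrict : (X → Y) → ι → Y := fun G => G ∘ z
  have hrestrict : Continuous restrict := continuous_pi fun i => continuous_apply (z i)
  obtain ⟨s, hsS, hs⟩ := mem_closure_iff_seq_limit.mp
    (image_closure_subset_closure_image hrestrict (mem_image_of_mem restrict hF))
  choose f hfS hfs using hsS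
  obtain rfl : s = restrict ∘ f := funext fun n => (hfs n).symm
  exact ⟨f, hfS, fun i => tendsto_pi_nhds.mp hs i⟩

namespace DULC

variable {X : Type*} [TopologicalSpace X] {A : Set (CpI X)}

theorem of_isCompact_closure_s14 (hA : IsCompact (closure A)) : DULC A := by
  rintro f hfA x 𝒰 𝒱 ⟨y, hxy⟩ g h u v hg hgu hh hhv
  have hf𝒰 : ↑(𝒰.map f) ≤ 𝓟 (closure A) := by
    rw [Ultrafilter.coe_map, le_principal_iff, mem_map]
    exact univ_mem' fun n => subset_closure (hfA n)
  obtain ⟨G, -, hfG⟩ := hA.ultrafilter_le_nhds (𝒰.map f) hf𝒰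
  have hfG_at : ∀ z : X, Tendsto (fun n => (f n).1 z) 𝒰 (𝓝 (G.1 z)) := fun z =>
    ((continuous_apply z).comp continuous_subtype_val).continuousAt.tendsto.comp hfG
  have hg_eq : g = fun n => (f n).1 y :=
    funext fun n => tendsto_nhds_unique (hg n) (((f n).2.tendsto y).comp hxy)
  have hh_eq : h = fun m => G.1 (x m) :=
    funext fun m => tendsto_nhds_unique (hh m) (hfG_at (x m))
  subst hg_eq hh_eq
  exact (tendsto_nhds_unique hgu (hfG_at y)).trans
    (tendsto_nhds_unique ((G.2.tendsto y).comp hxy) hhv)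

theorem tendsto_nhdsWithin_range (hA : DULC A) {F : X → unitInterval} {d : ℕ → X} {y : X}
    {f : ℕ → CpI X} (hfA : ∀ n, f n ∈ A) (hfy : Tendsto (fun n => (f n).1 y) atTop (𝓝 (F y)))
    (hfd : ∀ m, Tendsto (fun n => (f n).1 (d m)) atTop (𝓝 (F (d m)))) :
    Tendsto F (𝓝[range d] y) (𝓝 (F y)) := by
  rw [nhdsWithin, ← map_comap, tendsto_map'_iff, tendsto_iff_ultrafilter]
  intro 𝒱 h𝒱
  have hdy : Tendsto d 𝒱 (𝓝 y) := tendsto_iff_comap.mpr h𝒱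
  -- `[0,1]` is compact, so `F ∘ d` has a limit along `𝒱`.
  have hFd : Tendsto (F ∘ d) 𝒱 (𝓝 (𝒱.map (F ∘ d)).lim) :=
    Ultrafilter.le_nhds_lim (𝒱.map (F ∘ d))
  have h𝒰 : ((Ultrafilter.of atTop : Ultrafilter ℕ) : Filter ℕ) ≤ atTop := Ultrafilter.of_le atTop
  rwa [hA f hfA d (Ultrafilter.of atTop) 𝒱 ⟨y, hdy⟩ _ _ _ _
    (fun n => ((f n).2.tendsto y).comp hdy) (hfy.mono_left h𝒰)
    (fun m => (hfd m).mono_left h𝒰) hFd]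

theorem continuous_of_mem_closure [TopologicalSpace.SeparableSpace X] (hA : DULC A)
    {F : X → unitInterval} (hF : F ∈ closure (Subtype.val '' A)) : Continuous F := by
  rcases isEmpty_or_nonempty X with hX | hX
  · exact continuous_of_const fun x => isEmptyElim x
  obtain ⟨d, hd⟩ := TopologicalSpace.exists_dense_seq X
  have hFd : ∀ y, Tendsto F (𝓝[range d] y) (𝓝 (F y)) := by
    intro y
    obtain ⟨f, hfA, hf⟩ := exists_seq_forall_tendsto_of_mem_closure hF
      (fun o : Option ℕ => o.elim y d)
    choose a haA haf using hfA
    refine hA.tendsto_nhdsWithin_range haA (d := d) ?_ fun m => ?_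
    · simpa only [haf, Option.elim_none] using hf none
    · simpa only [haf, Option.elim_some] using hf (some m)
  have hextend : extendFrom (range d) F = F := funext fun y => extendFrom_eq (hd y) (hFd y)
  exact hextend ▸ continuous_extendFrom hd fun y => ⟨F y, hFd y⟩

end DULC

theorem separable_relativelyCompact_iff_DULC_general
    {X : Type*} [TopologicalSpace X]
    [TopologicalSpace.SeparableSpace X] (A : Set (CpI X)) :
    IsCompact (closure A) ↔ DULC A := by
  refine ⟨DULC.of_isCompact_closure_s14, fun hA => ?_⟩
  refine IsInducing.subtypeVal.isCompact_closure_of_closure_image_subset_range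
    (f := (Subtype.val : CpI X → X → unitInterval)) fun F hF => ?_
  exact ⟨⟨F, hA.continuous_of_mem_closure hF⟩, rfl⟩

/-- For a separable completely regular Hausdorff space `X`, a subset of
`Cp(X,[0,1])` has compact closure iff `DULC(A,X)` holds. -/
theorem separable_relativelyCompact_iff_DULC
    {X : Type*} [TopologicalSpace X] [CompletelyRegularSpace X] [T2Space X]
    [TopologicalSpace.SeparableSpace X] (A : Set (CpI X)) :
    IsCompact (closure A) ↔ DULC A :=
  separable_relativelyCompact_iff_DULC_general A
end

section
/- Let Y be a completely regular Hausdorff space which is a g-space. Then Y is a hereditary g-space if and only if every compact subspace of Y is Fréchet-Urysohn. -/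
open Set Filter Topology

/-! If every compact subspace is Fréchet–Urysohn and `A` is countably compact in `B`, then
`closure A` is compact since `Y` is a g-space, so each of its points is the limit of a sequence
in `A`. A sequence with infinite range has a limit point in `B`, which by Hausdorffness is its
limit, and a finite range is closed; either way `closure A ⊆ B`, so `B` is a g-space.

Conversely, let `closure A` be compact and `x ∈ closure A` be the limit of no sequence in `A`.
An infinite `S ⊆ A` whose only limit point is `x` would be enumerated by a sequence converging
to `x`, as `x` would be its only cluster point in a compact set; so `A` is countably compact in
`B = closure A \ {x}`. In a hereditary g-space this makes `B` compact, hence closed, which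
contradicts `x ∈ closure A`. -/

open Function

section LimitPoints

variable {Y : Type*} [TopologicalSpace Y] {x y z : Y} {S A C : Set Y}

lemma IsLimitPointOf.mono (h : IsLimitPointOf x S) (hST : S ⊆ A) : IsLimitPointOf x A :=
  fun U hU hxU => (h U hU hxU).mono (inter_subset_inter_left U hST)

lemma IsLimitPointOf.mem_closure (h : IsLimitPointOf x S) : x ∈ closure S :=
  mem_closure_iff.2 fun U hU hxU => (h U hU hxU).nonempty.imp fun _ hz => ⟨hz.2, hz.1⟩

lemma Topology.IsEmbedding.isLimitPointOf_image_iff {X : Type*} [TopologicalSpace X]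
    {f : X → Y} (hf : IsEmbedding f) {x : X} {S : Set X} :
    IsLimitPointOf (f x) (f '' S) ↔ IsLimitPointOf x S := by
  constructor
  · intro h U hU hxU
    obtain ⟨V, hV, rfl⟩ := hf.isInducing.isOpen_iff.1 hU
    exact (image_inter_preimage f S V ▸ h V hV hxU).of_image f
  · intro h V hV hxV
    rw [← image_inter_preimage]
    exact (h _ (hV.preimage hf.continuous) hxV).image hf.injective.injOn

lemma isLimitPointOf_range_of_mapClusterPt {u : ℕ → Y} (hu : Injective u)
    (h : MapClusterPt y atTop u) : IsLimitPointOf y (range u) := fun U hU hyU => by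
  have hinf : {n | u n ∈ U}.Infinite :=
    Nat.frequently_atTop_iff_infinite.1 (mapClusterPt_iff_frequently.1 h U (hU.mem_nhds hyU))
  refine (hinf.image hu.injOn).mono ?_
  rintro _ ⟨n, hn, rfl⟩
  exact ⟨mem_range_self n, hn⟩

lemma IsLimitPointOf.mapClusterPt {u : ℕ → Y} (h : IsLimitPointOf y (range u)) :
    MapClusterPt y atTop u := by
  refine mapClusterPt_iff_frequently.2 fun s hs => ?_
  obtain ⟨U, hUs, hU, hyU⟩ := mem_nhds_iff.1 hs
  refine Nat.frequently_atTop_iff_infinite.2 (Infinite.of_image u ((h U hU hyU).mono ?_))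
  rintro _ ⟨⟨n, rfl⟩, hn⟩
  exact ⟨n, hUs hn, rfl⟩

lemma IsLimitPointOf.eq_of_tendsto [T2Space Y] {u : ℕ → Y} (h : IsLimitPointOf y (range u))
    (hu : Tendsto u atTop (𝓝 z)) : y = z :=
  eq_of_nhds_neBot (ClusterPt.mono h.mapClusterPt hu).neBot

lemma mem_seqClosure_of_forall_isLimitPointOf_eq (hC : IsCompact C) (hSC : S ⊆ C)
    (hS : S.Infinite) (h : ∀ y, IsLimitPointOf y S → y = x) : x ∈ seqClosure S := by
  let e := hS.natEmbedding
  have he : Injective fun n => (e n : Y) := Subtype.val_injective.comp e.injective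
  refine ⟨fun n => e n, fun n => (e n).2, hC.tendsto_nhds_of_unique_mapClusterPt
    (Eventually.of_forall fun n => hSC (e n).2) fun y _ hy => h y ?_⟩
  exact (isLimitPointOf_range_of_mapClusterPt he hy).mono (range_subset_iff.2 fun n => (e n).2)

end LimitPoints

section Subspaces

variable {Y : Type*} [TopologicalSpace Y] {A B C : Set Y}

lemma CountablyCompactIn.mono (h : CountablyCompactIn A B) (hBC : B ⊆ C) :
    CountablyCompactIn A C :=
  fun S hSA hS => (h S hSA hS).imp fun _ hx => ⟨hBC hx.1, hx.2⟩

lemma countablyCompactIn_preimage_val_iff (hAB : A ⊆ B) :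
    CountablyCompactIn ((↑) ⁻¹' A : Set B) univ ↔ CountablyCompactIn A B := by
  have hlim {S : Set B} {x : B} : IsLimitPointOf x S ↔ IsLimitPointOf (x : Y) ((↑) '' S) :=
    IsEmbedding.subtypeVal.isLimitPointOf_image_iff.symm
  constructor
  · intro h S hSA hS
    have hSB : S ⊆ B := hSA.trans hAB
    obtain ⟨x, -, hx⟩ := h ((↑) ⁻¹' S) (preimage_mono hSA)
      (hS.preimage (by rwa [Subtype.range_coe]))
    rw [hlim, Subtype.image_preimage_coe, inter_eq_right.2 hSB] at hx
    exact ⟨x, x.2, hx⟩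
  · intro h S hSA hS
    obtain ⟨x, hxB, hx⟩ := h ((↑) '' S) (image_subset_iff.2 hSA)
      (hS.image Subtype.val_injective.injOn)
    exact ⟨⟨x, hxB⟩, mem_univ _, hlim.2 hx⟩

lemma image_val_closure_preimage_val (hAB : A ⊆ B) :
    ((↑) : B → Y) '' closure ((↑) ⁻¹' A) = B ∩ closure A := by
  rw [IsEmbedding.subtypeVal.closure_eq_preimage_closure_image, Subtype.image_preimage_coe,
    Subtype.image_preimage_coe, inter_eq_right.2 hAB]

lemma isGSpace_subtype_iff :
    IsGSpace B ↔ ∀ A ⊆ B, CountablyCompactIn A B → IsCompact (B ∩ closure A) := by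
  constructor
  · intro h A hAB hA
    rw [← image_val_closure_preimage_val hAB]
    exact (h _ ((countablyCompactIn_preimage_val_iff hAB).2 hA)).image continuous_subtype_val
  · intro h A hA
    have hAB : (↑) '' A ⊆ B := image_subset_iff.2 fun x _ => x.2
    rw [← preimage_image_eq A Subtype.val_injective] at hA ⊢
    rw [Subtype.isCompact_iff, image_val_closure_preimage_val hAB]
    exact h _ hAB ((countablyCompactIn_preimage_val_iff hAB).1 hA)

lemma frechetUrysohnSpace_subtype_iff {K : Set Y} :
    FrechetUrysohnSpace K ↔ ∀ A ⊆ K, K ∩ closure A ⊆ seqClosure A := by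
  constructor
  · intro _ A hAK z hz
    rw [← image_val_closure_preimage_val hAK] at hz
    obtain ⟨z, hz, rfl⟩ := hz
    obtain ⟨u, huA, hu⟩ := mem_closure_iff_seq_limit.1 hz
    exact ⟨fun n => u n, huA, (continuous_subtype_val.tendsto z).comp hu⟩
  · intro h
    refine ⟨fun s x hx => ?_⟩
    have hsK : (↑) '' s ⊆ K := image_subset_iff.2 fun x _ => x.2
    rw [← preimage_image_eq s Subtype.val_injective] at hx
    obtain ⟨u, hus, hu⟩ :=
      h _ hsK (image_val_closure_preimage_val hsK ▸ mem_image_of_mem _ hx)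
    choose v hv hvu using hus
    refine ⟨v, hv, ?_⟩
    rwa [IsEmbedding.subtypeVal.tendsto_nhds_iff, show (↑) ∘ v = u from funext hvu]

end Subspaces

section GSpaces

variable {Y : Type*} [TopologicalSpace Y] {x : Y} {A B : Set Y}

lemma countablyCompactIn_closure_diff_singleton (hA : IsCompact (closure A))
    (hx : x ∉ seqClosure A) : CountablyCompactIn A (closure A \ {x}) := by
  intro S hSA hS
  by_contra! hne
  obtain ⟨u, huS, hu⟩ := mem_seqClosure_of_forall_isLimitPointOf_eq hA
    (hSA.trans subset_closure) hS fun y hy => by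
      by_contra hyx
      exact hne y ⟨closure_mono hSA hy.mem_closure, hyx⟩ hy
  exact hx ⟨u, fun n => hSA (huS n), hu⟩

lemma closure_subset_seqClosure_of_isHereditaryGSpace [T2Space Y] (h : IsHereditaryGSpace Y)
    (hA : IsCompact (closure A)) : closure A ⊆ seqClosure A := by
  intro x hx
  by_contra hxA
  set B := closure A \ {x}
  have hAB : A ⊆ B := fun a ha =>
    ⟨subset_closure ha, by rintro rfl; exact hxA (subset_seqClosure ha)⟩
  have hB : IsCompact B := by
    have := isGSpace_subtype_iff.1 (h B) A hAB (countablyCompactIn_closure_diff_singleton hA hxA)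
    rwa [inter_eq_left.2 (sdiff_subset : B ⊆ closure A)] at this
  exact (closure_minimal hAB hB.isClosed hx).2 rfl

lemma seqClosure_subset_of_countablyCompactIn [T2Space Y] (h : CountablyCompactIn A B)
    (hAB : A ⊆ B) : seqClosure A ⊆ B := by
  rintro z ⟨u, huA, hu⟩
  by_cases hfin : (range u).Finite
  · obtain ⟨n, rfl⟩ : z ∈ range u := hfin.isClosed.closure_subset
      (mem_closure_of_tendsto hu (Eventually.of_forall mem_range_self))
    exact hAB (huA n)
  · obtain ⟨y, hyB, hy⟩ := h (range u) (range_subset_iff.2 huA) hfin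
    exact hy.eq_of_tendsto hu ▸ hyB

end GSpaces

theorem gSpace_hereditary_iff_compact_frechetUrysohn_general
    {Y : Type*} [TopologicalSpace Y] [T2Space Y]
    (hg : IsGSpace Y) :
    IsHereditaryGSpace Y ↔ ∀ K : Set Y, IsCompact K → FrechetUrysohnSpace K := by
  constructor
  · intro h K hK
    refine frechetUrysohnSpace_subtype_iff.2 fun A hAK => ?_
    have hA : IsCompact (closure A) :=
      hK.of_isClosed_subset isClosed_closure (closure_minimal hAK hK.isClosed)
    exact inter_subset_right.trans (closure_subset_seqClosure_of_isHereditaryGSpace h hA)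
  · intro h B
    refine isGSpace_subtype_iff.2 fun A hAB hA => ?_
    have hcl : IsCompact (closure A) := hg A (hA.mono (subset_univ B))
    have hseq : closure A ⊆ seqClosure A := by
      simpa only [inter_self] using
        frechetUrysohnSpace_subtype_iff.1 (h _ hcl) A subset_closure
    rwa [inter_eq_right.2 (hseq.trans (seqClosure_subset_of_countablyCompactIn hA hAB))]

/-- A g-space is a hereditary g-space iff every compact subspace is
Fréchet–Urysohn. -/
theorem gSpace_hereditary_iff_compact_frechetUrysohn
    {Y : Type*} [TopologicalSpace Y] [CompletelyRegularSpace Y] [T2Space Y]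
    (hg : IsGSpace Y) :
    IsHereditaryGSpace Y ↔ ∀ K : Set Y, IsCompact K → FrechetUrysohnSpace K :=
  gSpace_hereditary_iff_compact_frechetUrysohn_general hg
end
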